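/- Suppose (G_n, c_n), γ_n > 0 and δ_n → 0 satisfy Assumption (EO), with G_n simple and c_n connected. Then Σ_{(u,v)∈E(G_n)} c(u,v)·( R_eff(u↔v) − (1−δ_n)·1[u∈W_n]/C_u − (1−δ_n)·1[v∈W_n]/C_v ) = O(δ_n)|V(G_n)|, where W_n := {w ∈ V(G_n) : C_w ≥ γ_n}. -/

import Mathlib

open MeasureTheory Filter Finset
open Matrix

noncomputable section

set_option linter.unusedSectionVars false

namespace WSTPaper

variable {V : Type} [Fintype V] [DecidableEq V]

/-- The conductance `C_v = Σ_{u ~ v} c(u,v)` of a vertex in the electric network `(G, c)`. -/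
def vertCond (G : SimpleGraph V) [DecidableRel G.Adj] (c : Sym2 V → ℝ) (v : V) : ℝ :=
  ∑ u ∈ G.neighborFinset v, c s(u, v)

/-- The Dirichlet energy of a function `h` on the electric network `(G, c)`. -/
def energy (G : SimpleGraph V) [DecidableRel G.Adj] (c : Sym2 V → ℝ) (h : V → ℝ) : ℝ :=
  (1 / 2) * ∑ v : V, ∑ u ∈ G.neighborFinset v, c s(u, v) * (h u - h v) ^ 2

/-- The effective conductance `C_eff(a ↔ Z)`.  By Dirichlet's principle it equals
`C_a · P_a(τ_Z < τ_a⁺)`, the random-walk characterization of effective conductance. -/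
def effCond (G : SimpleGraph V) [DecidableRel G.Adj] (c : Sym2 V → ℝ) (a : V) (Z : Set V) : ℝ :=
  ⨅ h : {h : V → ℝ // h a = 1 ∧ ∀ z ∈ Z, h z = 0}, energy G c (h : V → ℝ)

/-- The effective resistance `R_eff(a ↔ Z) = 1 / (C_a · P_a(τ_Z < τ_a⁺))`. -/
def effResSet (G : SimpleGraph V) [DecidableRel G.Adj] (c : Sym2 V → ℝ) (a : V) (Z : Set V) :
    ℝ := (effCond G c a Z)⁻¹

/-- The effective resistance `R_eff(a ↔ b) = 1 / (C_a · P_a(τ_b < τ_a⁺))` between two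
vertices of the electric network `(G, c)`. -/
def effRes (G : SimpleGraph V) [DecidableRel G.Adj] (c : Sym2 V → ℝ) (a b : V) : ℝ :=
  effResSet G c a {b}

section Foster

variable (G : SimpleGraph V) [DecidableRel G.Adj] (c : Sym2 V → ℝ)

/-- swap lemma for sums over ordered adjacent pairs -/
lemma adj_sum_swap (f : V → V → ℝ) :
    ∑ u : V, ∑ v ∈ G.neighborFinset u, f u v = ∑ u : V, ∑ v ∈ G.neighborFinset u, f v u := by
  have h1 : ∀ (g : V → V → ℝ), ∑ u : V, ∑ v ∈ G.neighborFinset u, g u v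
      = ∑ u : V, ∑ v : V, if G.Adj u v then g u v else 0 := by
    intro g
    refine Finset.sum_congr rfl fun u _ => ?_
    rw [SimpleGraph.neighborFinset_eq_filter, Finset.sum_filter]
  rw [h1, h1, Finset.sum_comm]
  refine Finset.sum_congr rfl fun u _ => Finset.sum_congr rfl fun v _ => ?_
  simp only [G.adj_comm u v]

lemma vertCond_eq (u : V) : vertCond G c u = ∑ v ∈ G.neighborFinset u, c s(u, v) := by
  unfold vertCond
  refine Finset.sum_congr rfl fun v _ => ?_
  rw [Sym2.eq_swap]

/-- restatement of energy with outer variable first -/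
lemma energy_eq (h : V → ℝ) : energy G c h
    = (1/2) * ∑ u : V, ∑ v ∈ G.neighborFinset u, c s(u, v) * (h v - h u) ^ 2 := by
  rw [energy]
  congr 1
  refine Finset.sum_congr rfl fun u _ => Finset.sum_congr rfl fun v _ => ?_
  rw [Sym2.eq_swap]

/-- the (weighted) Laplacian matrix -/
def lap : Matrix V V ℝ := Matrix.of fun u v =>
  (if u = v then vertCond G c u else 0) - (if G.Adj u v then c s(u, v) else 0)

lemma lap_mulVec (h : V → ℝ) (u : V) :
    (lap G c *ᵥ h) u = vertCond G c u * h u - ∑ v ∈ G.neighborFinset u, c s(u, v) * h v := by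
  simp only [lap, Matrix.mulVec, dotProduct, Matrix.of_apply, sub_mul, ite_mul, zero_mul,
    Finset.sum_sub_distrib, Finset.sum_ite_eq, Finset.mem_univ, if_true]
  congr 1
  rw [SimpleGraph.neighborFinset_eq_filter, Finset.sum_filter]

lemma lap_transpose : (lap G c)ᵀ = lap G c := by
  ext u v
  simp only [lap, Matrix.transpose_apply, Matrix.of_apply]
  congr 1
  · by_cases h : u = v
    · subst h; simp
    · rw [if_neg (Ne.symm h), if_neg h]
  · by_cases h : G.Adj u v
    · rw [if_pos h.symm, if_pos h, Sym2.eq_swap]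
    · rw [if_neg (fun h' => h h'.symm), if_neg h]

lemma dot_lap (h : V → ℝ) : h ⬝ᵥ lap G c *ᵥ h = energy G c h := by
  have hA : ∑ u : V, ∑ v ∈ G.neighborFinset u, c s(u, v) * (h v)^2
      = ∑ u : V, ∑ v ∈ G.neighborFinset u, c s(u, v) * (h u)^2 := by
    rw [adj_sum_swap G fun u v => c s(u, v) * (h v)^2]
    refine Finset.sum_congr rfl fun u _ => Finset.sum_congr rfl fun v _ => ?_
    rw [Sym2.eq_swap]
  have expand : ∀ u v : V, c s(u,v) * (h v - h u)^2
      = c s(u,v)*(h v)^2 - 2*(c s(u,v)*(h u)*(h v)) + c s(u,v)*(h u)^2 := by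
    intro u v; ring
  rw [energy_eq]
  simp only [expand, Finset.sum_add_distrib, Finset.sum_sub_distrib, ← Finset.mul_sum, hA]
  simp only [dotProduct, lap_mulVec]
  have : ∀ u : V, h u * (vertCond G c u * h u - ∑ v ∈ G.neighborFinset u, c s(u, v) * h v)
      = ∑ v ∈ G.neighborFinset u, c s(u,v) * (h u)^2
        - ∑ v ∈ G.neighborFinset u, c s(u,v)*(h u)*(h v) := by
    intro u
    rw [mul_sub, vertCond_eq, Finset.sum_mul, Finset.mul_sum]
    congr 1
    · exact Finset.sum_congr rfl fun v _ => by ring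
    · rw [Finset.mul_sum]
      exact Finset.sum_congr rfl fun v _ => by ring
  simp only [this, Finset.sum_sub_distrib, ← Finset.mul_sum]
  ring


/-- the all-(1/n) matrix -/
def pmat : Matrix V V ℝ := Matrix.of fun _ _ => (Fintype.card V : ℝ)⁻¹

lemma pmat_mulVec (h : V → ℝ) (u : V) :
    (pmat *ᵥ h : V → ℝ) u = (Fintype.card V : ℝ)⁻¹ * ∑ v : V, h v := by
  simp [pmat, Matrix.mulVec, dotProduct, Finset.mul_sum]

lemma dot_pmat (h : V → ℝ) :
    h ⬝ᵥ pmat *ᵥ h = (Fintype.card V : ℝ)⁻¹ * (∑ v : V, h v) ^ 2 := by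
  simp only [dotProduct, pmat_mulVec]
  rw [← Finset.sum_mul]
  ring

/-- M = L + P -/
def mmat : Matrix V V ℝ := lap G c + pmat

lemma dot_mmat (h : V → ℝ) : h ⬝ᵥ mmat G c *ᵥ h
    = energy G c h + (Fintype.card V : ℝ)⁻¹ * (∑ v : V, h v) ^ 2 := by
  rw [mmat, Matrix.add_mulVec, dotProduct_add, dot_lap, dot_pmat]

lemma energy_nonneg (hpos : ∀ e ∈ G.edgeSet, 0 < c e) (h : V → ℝ) : 0 ≤ energy G c h := by
  rw [energy]
  have : (0:ℝ) ≤ ∑ v : V, ∑ u ∈ G.neighborFinset v, c s(u, v) * (h u - h v) ^ 2 := by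
    refine Finset.sum_nonneg fun v _ => Finset.sum_nonneg fun u hu => ?_
    rw [SimpleGraph.mem_neighborFinset] at hu
    exact mul_nonneg (le_of_lt (hpos _ ((SimpleGraph.mem_edgeSet G).mpr hu.symm))) (sq_nonneg _)
  linarith

lemma eq_of_energy_zero (hconn : G.Connected) (hpos : ∀ e ∈ G.edgeSet, 0 < c e)
    (h : V → ℝ) (hE : energy G c h = 0) (u v : V) : h u = h v := by
  have hS : ∑ v : V, ∑ u ∈ G.neighborFinset v, c s(u, v) * (h u - h v) ^ 2 = 0 := by
    rw [energy] at hE; linarith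
  have hnn : ∀ v ∈ Finset.univ, ∀ u ∈ G.neighborFinset v,
      (0:ℝ) ≤ c s(u, v) * (h u - h v) ^ 2 := by
    intro v _ u hu
    rw [SimpleGraph.mem_neighborFinset] at hu
    exact mul_nonneg (le_of_lt (hpos _ ((SimpleGraph.mem_edgeSet G).mpr hu.symm))) (sq_nonneg _)
  rw [Finset.sum_eq_zero_iff_of_nonneg
    (fun v hv => Finset.sum_nonneg (hnn v hv))] at hS
  have step : ∀ a b : V, G.Adj a b → h a = h b := by
    intro a b hab
    have h2 := (Finset.sum_eq_zero_iff_of_nonneg (hnn b (Finset.mem_univ b))).mp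
      (hS b (Finset.mem_univ b)) a (by rw [SimpleGraph.mem_neighborFinset]; exact hab.symm)
    have hc : 0 < c s(a, b) := hpos _ ((SimpleGraph.mem_edgeSet G).mpr hab)
    have : (h a - h b) ^ 2 = 0 := by
      rcases mul_eq_zero.mp h2 with h' | h'
      · exact absurd h' (ne_of_gt hc)
      · exact h'
    have := pow_eq_zero_iff (n := 2) (by norm_num) |>.mp this
    linarith
  obtain ⟨w⟩ := hconn.preconnected u v
  induction w with
  | nil => rfl
  | cons hadj p ih => exact (step _ _ hadj).trans ih


lemma pmat_transpose : (pmat : Matrix V V ℝ)ᵀ = pmat := by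
  ext u v; rfl

lemma mmat_transpose : (mmat G c)ᵀ = mmat G c := by
  rw [mmat, Matrix.transpose_add, lap_transpose, pmat_transpose]

lemma mmat_isHermitian : (mmat G c).IsHermitian := by
  rw [Matrix.IsHermitian, Matrix.conjTranspose, mmat_transpose]
  ext u v
  simp

lemma card_pos (hconn : G.Connected) : (0:ℝ) < (Fintype.card V : ℝ) := by
  have : Nonempty V := hconn.nonempty
  exact_mod_cast Fintype.card_pos

lemma mmat_posDef (hconn : G.Connected) (hpos : ∀ e ∈ G.edgeSet, 0 < c e) :
    (mmat G c).PosDef := by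
  have hn := card_pos G hconn
  refine Matrix.PosDef.of_dotProduct_mulVec_pos (mmat_isHermitian G c) fun x hx => ?_
  rw [star_trivial, dot_mmat]
  rcases eq_or_lt_of_le (energy_nonneg G c hpos x) with hE | hE
  · obtain ⟨v₀⟩ : Nonempty V := hconn.nonempty
    have hconst := eq_of_energy_zero G c hconn hpos x hE.symm
    have hx0 : x v₀ ≠ 0 := by
      intro h0
      exact hx (funext fun w => by rw [hconst w v₀, h0]; rfl)
    have hsum : ∑ v : V, x v = (Fintype.card V : ℝ) * x v₀ := by
      rw [Finset.sum_congr rfl (fun v _ => hconst v v₀), Finset.sum_const,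
        Finset.card_univ, nsmul_eq_mul]
    have hpos2 : 0 < (Fintype.card V : ℝ)⁻¹ * (∑ v : V, x v) ^ 2 := by
      rw [hsum]
      have h2 : (Fintype.card V : ℝ) * x v₀ ≠ 0 :=
        mul_ne_zero (ne_of_gt hn) hx0
      positivity
    linarith
  · have : 0 ≤ (Fintype.card V : ℝ)⁻¹ * (∑ v : V, x v) ^ 2 := by positivity
    linarith


lemma mmat_mul_inv (hconn : G.Connected) (hpos : ∀ e ∈ G.edgeSet, 0 < c e) :
    mmat G c * (mmat G c)⁻¹ = 1 :=
  Matrix.mul_nonsing_inv _ ((Matrix.isUnit_iff_isUnit_det _).mp (mmat_posDef G c hconn hpos).isUnit)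

lemma inv_mul_mmat (hconn : G.Connected) (hpos : ∀ e ∈ G.edgeSet, 0 < c e) :
    (mmat G c)⁻¹ * mmat G c = 1 :=
  Matrix.nonsing_inv_mul _ ((Matrix.isUnit_iff_isUnit_det _).mp (mmat_posDef G c hconn hpos).isUnit)

lemma dot_mulVec_symm (A : Matrix V V ℝ) (hA : Aᵀ = A) (u w : V → ℝ) :
    u ⬝ᵥ A *ᵥ w = w ⬝ᵥ A *ᵥ u := by
  rw [dotProduct_mulVec, ← Matrix.mulVec_transpose, hA, dotProduct_comm]

/-- the vector e_a - e_b -/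
def xvec (a b : V) : V → ℝ := fun w => (if w = a then 1 else 0) - (if w = b then 1 else 0)

lemma dot_xvec (a b : V) (y : V → ℝ) : y ⬝ᵥ xvec a b = y a - y b := by
  simp only [dotProduct, xvec, mul_sub, mul_ite, mul_one, mul_zero,
    Finset.sum_sub_distrib, Finset.sum_ite_eq', Finset.mem_univ, if_true]

lemma xvec_dot (a b : V) (y : V → ℝ) : xvec a b ⬝ᵥ y = y a - y b := by
  rw [dotProduct_comm, dot_xvec]

lemma mulVec_xvec (A : Matrix V V ℝ) (a b w : V) :
    (A *ᵥ xvec a b) w = A w a - A w b := by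
  simp only [Matrix.mulVec, dotProduct, xvec, mul_sub, mul_ite, mul_one, mul_zero,
    Finset.sum_sub_distrib, Finset.sum_ite_eq', Finset.mem_univ, if_true]

/-- the quadratic form value q = x ⬝ N x -/
def qval (a b : V) : ℝ := xvec a b ⬝ᵥ ((mmat G c)⁻¹ *ᵥ xvec a b)

lemma qval_pos (hconn : G.Connected) (hpos : ∀ e ∈ G.edgeSet, 0 < c e)
    {a b : V} (hab : a ≠ b) : 0 < qval G c a b := by
  have hinv := (mmat_posDef G c hconn hpos).inv
  have hx : xvec a b ≠ (0 : V → ℝ) := by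
    intro h0
    have := congrFun h0 a
    simp [xvec, if_neg hab] at this
  have := hinv.dotProduct_mulVec_pos hx
  rwa [star_trivial] at this

lemma energy_sub_const (h : V → ℝ) (m : ℝ) :
    energy G c (fun w => h w - m) = energy G c h := by
  rw [energy, energy]
  congr 1
  refine Finset.sum_congr rfl fun v _ => Finset.sum_congr rfl fun u _ => ?_
  ring_nf

lemma inv_transpose_mmat : ((mmat G c)⁻¹)ᵀ = (mmat G c)⁻¹ := by
  rw [Matrix.transpose_nonsing_inv, mmat_transpose]

lemma energy_lower (hconn : G.Connected) (hpos : ∀ e ∈ G.edgeSet, 0 < c e)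
    {a b : V} (hab : a ≠ b) (h : V → ℝ) (hh : h a - h b = 1) :
    (qval G c a b)⁻¹ ≤ energy G c h := by
  have hn := card_pos G hconn
  have hq := qval_pos G c hconn hpos hab
  set n : ℝ := (Fintype.card V : ℝ)
  set x : V → ℝ := xvec a b
  set N : Matrix V V ℝ := (mmat G c)⁻¹
  set q : ℝ := qval G c a b with hqdef
  set m : ℝ := n⁻¹ * ∑ v : V, h v
  set hb : V → ℝ := fun w => h w - m with hbdef
  have hsum0 : ∑ v : V, hb v = 0 := by
    simp only [hbdef, Finset.sum_sub_distrib, Finset.sum_const, Finset.card_univ, nsmul_eq_mul]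
    simp only [m]
    field_simp
    simp [n]
  have hObar : hb ⬝ᵥ mmat G c *ᵥ hb = energy G c h := by
    rw [dot_mmat, hsum0, energy_sub_const]
    ring
  have hxb : hb ⬝ᵥ x = 1 := by
    rw [dot_xvec]
    simp only [hbdef]
    linarith
  set y : V → ℝ := N *ᵥ x with hydef
  have hMy : mmat G c *ᵥ y = x := by
    rw [hydef, Matrix.mulVec_mulVec, mmat_mul_inv G c hconn hpos, Matrix.one_mulVec]
  have hcross : hb ⬝ᵥ mmat G c *ᵥ y = 1 := by rw [hMy, hxb]
  have hcross' : y ⬝ᵥ mmat G c *ᵥ hb = 1 := by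
    rw [dot_mulVec_symm _ (mmat_transpose G c), hcross]
  have hyMy : y ⬝ᵥ mmat G c *ᵥ y = q := by
    rw [hMy, dotProduct_comm, hqdef, qval]
  set g : V → ℝ := hb - q⁻¹ • y with hgdef
  have h0 : 0 ≤ g ⬝ᵥ mmat G c *ᵥ g := by
    have := (mmat_posDef G c hconn hpos).posSemidef.dotProduct_mulVec_nonneg g
    rwa [star_trivial] at this
  simp only [hgdef, Matrix.mulVec_sub, Matrix.mulVec_smul, sub_dotProduct,
    dotProduct_sub, smul_dotProduct, dotProduct_smul, smul_eq_mul,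
    hObar, hcross, hcross', hyMy] at h0
  have hqne : q ≠ 0 := ne_of_gt hq
  have hexp : q⁻¹ * (q⁻¹ * q) = q⁻¹ := by field_simp
  nlinarith [h0, hexp]


lemma exists_min (hconn : G.Connected) (hpos : ∀ e ∈ G.edgeSet, 0 < c e)
    {a b : V} (hab : a ≠ b) :
    ∃ h : V → ℝ, h a = 1 ∧ h b = 0 ∧ energy G c h = (qval G c a b)⁻¹ := by
  have hn := card_pos G hconn
  have hq := qval_pos G c hconn hpos hab
  have hqne : qval G c a b ≠ 0 := ne_of_gt hq
  set q : ℝ := qval G c a b with hqdef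
  set y : V → ℝ := (mmat G c)⁻¹ *ᵥ xvec a b with hydef
  have hyab : y a - y b = q := by
    rw [hqdef, qval, xvec_dot]
  refine ⟨fun w => q⁻¹ * y w - q⁻¹ * y b,
    by show q⁻¹ * y a - q⁻¹ * y b = 1; rw [← mul_sub, hyab]; field_simp, by ring, ?_⟩
  rw [energy_sub_const]
  have hz : energy G c (fun w => q⁻¹ * y w)
      = (q⁻¹ • y) ⬝ᵥ mmat G c *ᵥ (q⁻¹ • y)
        - (Fintype.card V : ℝ)⁻¹ * (∑ v : V, q⁻¹ * y v) ^ 2 := by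
    have := dot_mmat G c (fun w => q⁻¹ * y w)
    have heq : (q⁻¹ • y) = (fun w => q⁻¹ * y w) := rfl
    rw [heq]
    linarith [this]
  have hMy : mmat G c *ᵥ y = xvec a b := by
    rw [hydef, Matrix.mulVec_mulVec, mmat_mul_inv G c hconn hpos, Matrix.one_mulVec]
  have hyMy : y ⬝ᵥ mmat G c *ᵥ y = q := by
    rw [hMy, dotProduct_comm, hqdef, qval]
  have hsm : (q⁻¹ • y) ⬝ᵥ mmat G c *ᵥ (q⁻¹ • y) = q⁻¹ * (q⁻¹ * q) := by
    rw [Matrix.mulVec_smul, smul_dotProduct, dotProduct_smul, hyMy,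
      smul_eq_mul, smul_eq_mul]
  have hle : energy G c (fun w => q⁻¹ * y w) ≤ q⁻¹ := by
    rw [hz, hsm]
    have h1 : q⁻¹ * (q⁻¹ * q) = q⁻¹ := by field_simp
    have h2 : (0:ℝ) ≤ (Fintype.card V : ℝ)⁻¹ * (∑ v : V, q⁻¹ * y v) ^ 2 := by positivity
    linarith
  have hge : q⁻¹ ≤ energy G c (fun w => q⁻¹ * y w) := by
    refine energy_lower G c hconn hpos hab _ ?_
    rw [← mul_sub, hyab]
    field_simp
  linarith

lemma effCond_pair (hconn : G.Connected) (hpos : ∀ e ∈ G.edgeSet, 0 < c e)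
    {a b : V} (hab : a ≠ b) : effCond G c a {b} = (qval G c a b)⁻¹ := by
  obtain ⟨h₀, h₀a, h₀b, h₀E⟩ := exists_min G c hconn hpos hab
  have hlow : ∀ h : {h : V → ℝ // h a = 1 ∧ ∀ z ∈ ({b} : Set V), h z = 0},
      (qval G c a b)⁻¹ ≤ energy G c (h : V → ℝ) := by
    rintro ⟨h, ha, hb⟩
    refine energy_lower G c hconn hpos hab h ?_
    rw [ha, hb b (Set.mem_singleton b), sub_zero]
  have hmem : ∀ z ∈ ({b} : Set V), h₀ z = 0 := by
    intro z hz
    rw [Set.mem_singleton_iff] at hz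
    rw [hz]; exact h₀b
  have : Nonempty {h : V → ℝ // h a = 1 ∧ ∀ z ∈ ({b} : Set V), h z = 0} := ⟨⟨h₀, h₀a, hmem⟩⟩
  refine le_antisymm ?_ (le_ciInf hlow)
  have hbdd : BddBelow (Set.range fun h : {h : V → ℝ // h a = 1 ∧ ∀ z ∈ ({b} : Set V), h z = 0}
      => energy G c (h : V → ℝ)) := by
    refine ⟨(qval G c a b)⁻¹, ?_⟩
    rintro r ⟨h, rfl⟩
    exact hlow h
  have := ciInf_le hbdd (⟨h₀, h₀a, hmem⟩ :
    {h : V → ℝ // h a = 1 ∧ ∀ z ∈ ({b} : Set V), h z = 0})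
  rwa [h₀E] at this

lemma effRes_eq_qval (hconn : G.Connected) (hpos : ∀ e ∈ G.edgeSet, 0 < c e)
    {a b : V} (hab : a ≠ b) : effRes G c a b = qval G c a b := by
  rw [effRes, effResSet, effCond_pair G c hconn hpos hab, inv_inv]

lemma qval_entries (a b : V) : qval G c a b
    = (mmat G c)⁻¹ a a + (mmat G c)⁻¹ b b - (mmat G c)⁻¹ a b - (mmat G c)⁻¹ b a := by
  rw [qval, xvec_dot, mulVec_xvec, mulVec_xvec]
  ring


lemma lap_row_sum (u : V) : ∑ w : V, lap G c u w = 0 := by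
  simp only [lap, Matrix.of_apply, Finset.sum_sub_distrib, Finset.sum_ite_eq,
    Finset.mem_univ, if_true]
  have := vertCond_eq G c u
  rw [SimpleGraph.neighborFinset_eq_filter, Finset.sum_filter] at this
  rw [← this, sub_self]

lemma lap_mul_pmat : lap G c * pmat = (0 : Matrix V V ℝ) := by
  ext u v
  simp only [Matrix.mul_apply, pmat, Matrix.of_apply, Matrix.zero_apply]
  rw [← Finset.sum_mul, lap_row_sum, zero_mul]

lemma pmat_mul_pmat (hconn : G.Connected) : (pmat : Matrix V V ℝ) * pmat = pmat := by
  have hn := card_pos G hconn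
  ext u v
  simp only [Matrix.mul_apply, pmat, Matrix.of_apply, Finset.sum_const, Finset.card_univ,
    nsmul_eq_mul]
  field_simp

lemma inv_mul_pmat (hconn : G.Connected) (hpos : ∀ e ∈ G.edgeSet, 0 < c e) :
    (mmat G c)⁻¹ * pmat = pmat := by
  have h1 : mmat G c * pmat = pmat := by
    rw [mmat, Matrix.add_mul, lap_mul_pmat, pmat_mul_pmat G hconn, zero_add]
  calc (mmat G c)⁻¹ * pmat = (mmat G c)⁻¹ * (mmat G c * pmat) := by rw [h1]
  _ = ((mmat G c)⁻¹ * mmat G c) * pmat := by rw [Matrix.mul_assoc]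
  _ = pmat := by rw [inv_mul_mmat G c hconn hpos, Matrix.one_mul]

lemma inv_mul_lap (hconn : G.Connected) (hpos : ∀ e ∈ G.edgeSet, 0 < c e) :
    (mmat G c)⁻¹ * lap G c = 1 - pmat := by
  have hl : lap G c = mmat G c - pmat := by rw [mmat, add_sub_cancel_right]
  rw [hl, Matrix.mul_sub, inv_mul_mmat G c hconn hpos, inv_mul_pmat G c hconn hpos]

lemma trace_pmat (hconn : G.Connected) : Matrix.trace (pmat : Matrix V V ℝ) = 1 := by
  have hn := card_pos G hconn
  rw [Matrix.trace]
  simp only [Matrix.diag, pmat, Matrix.of_apply, Finset.sum_const, Finset.card_univ,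
    nsmul_eq_mul]
  field_simp

lemma trace_inv_mul_lap (hconn : G.Connected) (hpos : ∀ e ∈ G.edgeSet, 0 < c e) :
    Matrix.trace ((mmat G c)⁻¹ * lap G c) = (Fintype.card V : ℝ) - 1 := by
  rw [inv_mul_lap G c hconn hpos, Matrix.trace_sub, Matrix.trace_one, trace_pmat G hconn]

/-- **Foster's theorem** -/
lemma foster (hconn : G.Connected) (hpos : ∀ e ∈ G.edgeSet, 0 < c e) :
    (1/2) * ∑ u : V, ∑ v ∈ G.neighborFinset u, c s(u, v) * effRes G c u v
      = (Fintype.card V : ℝ) - 1 := by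
  set N : Matrix V V ℝ := (mmat G c)⁻¹ with hN
  have hstep : ∀ u : V, ∀ v ∈ G.neighborFinset u, c s(u, v) * effRes G c u v
      = c s(u,v) * N u u + c s(u,v) * N v v - c s(u,v) * N u v - c s(u,v) * N v u := by
    intro u v hv
    rw [SimpleGraph.mem_neighborFinset] at hv
    rw [effRes_eq_qval G c hconn hpos hv.ne, qval_entries]
    ring
  rw [Finset.sum_congr rfl fun u _ => Finset.sum_congr rfl (hstep u)]
  simp only [Finset.sum_add_distrib, Finset.sum_sub_distrib]
  have hswap1 : ∑ u : V, ∑ v ∈ G.neighborFinset u, c s(u,v) * N v v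
      = ∑ u : V, ∑ v ∈ G.neighborFinset u, c s(u,v) * N u u := by
    rw [adj_sum_swap G fun u v => c s(u,v) * N v v]
    refine Finset.sum_congr rfl fun u _ => Finset.sum_congr rfl fun v _ => ?_
    rw [Sym2.eq_swap]
  have hswap2 : ∑ u : V, ∑ v ∈ G.neighborFinset u, c s(u,v) * N v u
      = ∑ u : V, ∑ v ∈ G.neighborFinset u, c s(u,v) * N u v := by
    rw [adj_sum_swap G fun u v => c s(u,v) * N v u]
    refine Finset.sum_congr rfl fun u _ => Finset.sum_congr rfl fun v _ => ?_
    rw [Sym2.eq_swap]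
  rw [hswap1, hswap2]
  have htr : ∑ u : V, (N u u * vertCond G c u
        - ∑ v ∈ G.neighborFinset u, c s(u,v) * N u v)
      = (Fintype.card V : ℝ) - 1 := by
    rw [← trace_inv_mul_lap G c hconn hpos, Matrix.trace]
    refine Finset.sum_congr rfl fun u _ => ?_
    rw [Matrix.diag_apply, Matrix.mul_apply]
    simp only [lap, Matrix.of_apply, mul_sub, mul_ite, mul_zero,
      Finset.sum_sub_distrib, Finset.sum_ite_eq', Finset.mem_univ, if_true]
    congr 1
    rw [SimpleGraph.neighborFinset_eq_filter, Finset.sum_filter]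
    refine Finset.sum_congr rfl fun v _ => ?_
    by_cases h : G.Adj u v
    · simp only [if_pos h, if_pos h.symm, Sym2.eq_swap]
      ring
    · simp only [if_neg h, if_neg (fun h' : G.Adj v u => h h'.symm)]
  have hC : ∀ u : V, ∑ v ∈ G.neighborFinset u, c s(u,v) * N u u
      = N u u * vertCond G c u := by
    intro u
    rw [vertCond_eq, Finset.mul_sum]
    exact Finset.sum_congr rfl fun v _ => mul_comm _ _
  have hfin : ∑ u : V, ∑ v ∈ G.neighborFinset u, c s(u,v) * N u u
      = ∑ u : V, N u u * vertCond G c u := Finset.sum_congr rfl fun u _ => hC u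
  rw [Finset.sum_sub_distrib] at htr
  linarith [htr, hfin]


/-- the key exact identity -/
lemma key_identity (hconn : G.Connected) (hpos : ∀ e ∈ G.edgeSet, 0 < c e)
    {γ δ : ℝ} (hγ : 0 < γ) :
    (1/2) * ∑ u : V, ∑ v ∈ G.neighborFinset u, c s(u, v) * (effRes G c u v
      - (if γ ≤ vertCond G c u then (1-δ)/vertCond G c u else 0)
      - (if γ ≤ vertCond G c v then (1-δ)/vertCond G c v else 0))
    = ((Fintype.card V : ℝ) - 1)
      - (1-δ) * ((Finset.univ.filter fun v : V => γ ≤ vertCond G c v).card : ℝ) := by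
  set ind : V → ℝ := fun u => if γ ≤ vertCond G c u then (1-δ)/vertCond G c u else 0 with hind
  have hsplit : ∀ u v : V, c s(u, v) * (effRes G c u v - ind u - ind v)
      = c s(u,v) * effRes G c u v - c s(u,v) * ind u - c s(u,v) * ind v := by
    intro u v; ring
  rw [Finset.sum_congr rfl fun u _ => Finset.sum_congr rfl fun v _ => hsplit u v]
  simp only [Finset.sum_sub_distrib]
  have hSu : ∑ u : V, ∑ v ∈ G.neighborFinset u, c s(u,v) * ind u
      = (1-δ) * ((Finset.univ.filter fun v : V => γ ≤ vertCond G c v).card : ℝ) := by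
    have h1 : ∀ u : V, ∑ v ∈ G.neighborFinset u, c s(u,v) * ind u
        = (if γ ≤ vertCond G c u then (1-δ) else 0) := by
      intro u
      rw [← Finset.sum_mul, ← vertCond_eq, hind]
      simp only
      by_cases h : γ ≤ vertCond G c u
      · rw [if_pos h, if_pos h, mul_div_cancel₀ _ (ne_of_gt (lt_of_lt_of_le hγ h))]
      · rw [if_neg h, if_neg h, mul_zero]
    rw [Finset.sum_congr rfl fun u _ => h1 u, ← Finset.sum_filter, Finset.sum_const,
      nsmul_eq_mul, mul_comm]
  have hSv : ∑ u : V, ∑ v ∈ G.neighborFinset u, c s(u,v) * ind v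
      = ∑ u : V, ∑ v ∈ G.neighborFinset u, c s(u,v) * ind u := by
    rw [adj_sum_swap G fun u v => c s(u,v) * ind v]
    refine Finset.sum_congr rfl fun u _ => Finset.sum_congr rfl fun v _ => ?_
    rw [Sym2.eq_swap]
  have hF := foster G c hconn hpos
  rw [hSv, hSu]
  rw [hSu] at hSv
  linarith [hF]

end Foster

/-- the quantitative bound for a single network -/
lemma single_bound (G : SimpleGraph V) [DecidableRel G.Adj] (c : Sym2 V → ℝ)
    {γ δ : ℝ} (hconn : G.Connected) (hpos : ∀ e ∈ G.edgeSet, 0 < c e)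
    (hγ : 0 < γ) (hδ2 : δ < 1/2)
    (hW : ((Finset.univ.filter fun v : V => γ ≤ vertCond G c v).card : ℝ)
      ≥ (1 - δ) * (Fintype.card V : ℝ))
    (hc : ∀ e ∈ G.edgeSet, c e ≤ δ * γ) :
    |(1/2) * ∑ u : V, ∑ v ∈ G.neighborFinset u, c s(u, v) * (effRes G c u v
      - (if γ ≤ vertCond G c u then (1-δ)/vertCond G c u else 0)
      - (if γ ≤ vertCond G c v then (1-δ)/vertCond G c v else 0))|
    ≤ 2 * |δ * (Fintype.card V : ℝ)| := by
  have hn := card_pos G hconn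
  set n : ℝ := (Fintype.card V : ℝ) with hndef
  set W : ℝ := ((Finset.univ.filter fun v : V => γ ≤ vertCond G c v).card : ℝ) with hWdef
  -- W is nonempty
  have hWpos : 0 < W := by
    have : (1 - δ) * n > 0 := mul_pos (by linarith) hn
    linarith
  obtain ⟨w, hw⟩ : ∃ w : V, γ ≤ vertCond G c w := by
    have hc' : (0:ℝ) < ((Finset.univ.filter fun v : V => γ ≤ vertCond G c v).card : ℝ) := by
      rw [← hWdef]; exact hWpos
    have : (Finset.univ.filter fun v : V => γ ≤ vertCond G c v).Nonempty := by
      rw [← Finset.card_pos]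
      exact_mod_cast hc'
    obtain ⟨w, hw⟩ := this
    exact ⟨w, (Finset.mem_filter.mp hw).2⟩
  -- δ * n ≥ 1
  have hdn : 1 ≤ δ * n := by
    have hdeg : vertCond G c w ≤ (G.degree w : ℝ) * (δ * γ) := by
      rw [vertCond]
      calc ∑ u ∈ G.neighborFinset w, c s(u, w)
          ≤ ∑ _u ∈ G.neighborFinset w, δ * γ := by
            refine Finset.sum_le_sum fun u hu => ?_
            rw [SimpleGraph.mem_neighborFinset] at hu
            exact hc _ ((SimpleGraph.mem_edgeSet G).mpr hu.symm)
      _ = (G.degree w : ℝ) * (δ * γ) := by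
            rw [Finset.sum_const, nsmul_eq_mul, SimpleGraph.card_neighborFinset_eq_degree]
    have hdegn : (G.degree w : ℝ) ≤ n := by
      rw [hndef]
      exact_mod_cast le_of_lt (G.degree_lt_card_verts w)
    have hδpos : 0 < δ := by
      by_contra hneg
      push_neg at hneg
      have : (G.degree w : ℝ) * (δ * γ) ≤ 0 := by
        apply mul_nonpos_of_nonneg_of_nonpos (Nat.cast_nonneg _)
        exact mul_nonpos_of_nonpos_of_nonneg hneg (le_of_lt hγ)
      linarith
    have : γ ≤ n * (δ * γ) := le_trans hw (le_trans hdeg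
      (mul_le_mul_of_nonneg_right hdegn (by positivity)))
    have hγne : γ ≠ 0 := ne_of_gt hγ
    nlinarith
  have hkey := key_identity G c hconn hpos (δ := δ) hγ
  rw [hkey]
  have hWn : W ≤ n := by
    rw [hWdef, hndef]
    exact_mod_cast Finset.card_filter_le _ _
  have hδpos : 0 < δ := by nlinarith
  have habs : |δ * n| = δ * n := abs_of_pos (by positivity)
  rw [habs]
  rw [abs_le]
  constructor
  · -- lower: n - 1 - (1-δ)W ≥ δn - 1 ≥ 0 ≥ -2δn
    nlinarith
  · -- upper: n - 1 - (1-δ)W ≤ n - 1 - (1-δ)²n ≤ 2δn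
    nlinarith [sq_nonneg δ, mul_le_mul_of_nonneg_left hW (le_of_lt (show (0:ℝ) < 1 - δ by linarith))]


/-- Under Assumption (EO) (with `Gₙ` simple and `cₙ` connected),
`Σ_{(u,v)∈E(Gₙ)} c(u,v)·(R_eff(u↔v) − (1-δₙ)·1[u∈Wₙ]/C_u − (1-δₙ)·1[v∈Wₙ]/C_v)
 = O(δₙ)|V(Gₙ)|`, where `Wₙ = {w : C_w ≥ γₙ}`.  (Each unordered edge is counted once;
below the sum over ordered adjacent pairs is halved.) -/
theorem effRes_edge_sum_bigO
    (V : ℕ → Type) [∀ n, Fintype (V n)] [∀ n, DecidableEq (V n)]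
    (G : ∀ n, SimpleGraph (V n)) [∀ n, DecidableRel (G n).Adj]
    (c : ∀ n, Sym2 (V n) → ℝ) (γ : ℕ → ℝ) (δ : ℕ → ℝ)
    (hconn : ∀ n, (G n).Connected)
    (hpos : ∀ n, ∀ e ∈ (G n).edgeSet, 0 < c n e)
    (hγ : ∀ n, 0 < γ n)
    (hδ : Tendsto δ atTop (nhds 0))
    (hW : ∀ᶠ n in atTop,
      (((Finset.univ.filter fun v : V n => γ n ≤ vertCond (G n) (c n) v).card : ℝ))
        ≥ (1 - δ n) * (Fintype.card (V n) : ℝ))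
    (hc : ∀ᶠ n in atTop, ∀ e ∈ (G n).edgeSet, c n e ≤ δ n * γ n) :
    (fun n => (1 / 2) * ∑ u : V n, ∑ v ∈ (G n).neighborFinset u,
        c n s(u, v) * (effRes (G n) (c n) u v -
          (if γ n ≤ vertCond (G n) (c n) u then (1 - δ n) / vertCond (G n) (c n) u else 0) -
          (if γ n ≤ vertCond (G n) (c n) v then (1 - δ n) / vertCond (G n) (c n) v else 0)))
      =O[atTop] fun n => δ n * (Fintype.card (V n) : ℝ) := by
  rw [Asymptotics.isBigO_iff]
  refine ⟨2, ?_⟩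
  have hδ2 : ∀ᶠ n in atTop, δ n < 1/2 := hδ.eventually_lt_const (by norm_num)
  filter_upwards [hW, hc, hδ2] with n hWn hcn hδn
  rw [Real.norm_eq_abs, Real.norm_eq_abs]
  exact single_bound (G n) (c n) (hconn n) (hpos n) (hγ n) hδn hWn hcn

end WSTPaper
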